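/- Let S be a finite nonempty alphabet, n ≥ 1, F = {f_i : ℝⁿ → ℝⁿ}_{i∈S} a family of continuous maps, and C a covering family of languages over S. If there exists a C-memory-based Lyapunov function W : C × ℝⁿ → ℝ for F, then the switched system x(k+1) = f_{σ(k)}(x(k)) is uniformly globally asymptotically stable (UGAS). -/

import Mathlib

open Filter Topology NNReal

def IsClassKInf (α : ℝ≥0 → ℝ≥0) : Prop :=
  Continuous α ∧ α 0 = 0 ∧ StrictMono α ∧ ∀ M : ℝ≥0, ∃ r, M ≤ α r

def IsClassKL (β : ℝ≥0 → ℝ≥0 → ℝ≥0) : Prop :=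
  Continuous (fun p : ℝ≥0 × ℝ≥0 => β p.1 p.2) ∧
  (∀ t, Continuous (fun r => β r t) ∧ β 0 t = 0 ∧ StrictMono (fun r => β r t)) ∧
  (∀ r, Antitone (β r) ∧ Tendsto (β r) atTop (𝓝 0))

def PathComplete {N S : Type*} (E : Set (N × N × S)) : Prop :=
  ∀ K : ℕ, 1 ≤ K → ∀ j : Fin K → S, ∃ a : Fin (K + 1) → N,
    ∀ k : Fin K, (a k.castSucc, a k.succ, j k) ∈ E

def sol {n : ℕ} {S : Type*} (f : S → EuclideanSpace ℝ (Fin n) → EuclideanSpace ℝ (Fin n))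
    (σ : ℕ → S) (x0 : EuclideanSpace ℝ (Fin n)) : ℕ → EuclideanSpace ℝ (Fin n)
  | 0 => x0
  | k + 1 => f (σ k) (sol f σ x0 k)

def UGAS {n : ℕ} {S : Type*}
    (f : S → EuclideanSpace ℝ (Fin n) → EuclideanSpace ℝ (Fin n)) : Prop :=
  ∃ β : ℝ≥0 → ℝ≥0 → ℝ≥0, IsClassKL β ∧
    ∀ (σ : ℕ → S) (x0 : EuclideanSpace ℝ (Fin n)) (k : ℕ),
      ‖sol f σ x0 k‖₊ ≤ β ‖x0‖₊ (k : ℝ≥0)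

def IsPCLF {n : ℕ} {S N : Type*} (E : Set (N × N × S))
    (f : S → EuclideanSpace ℝ (Fin n) → EuclideanSpace ℝ (Fin n))
    (V : N → EuclideanSpace ℝ (Fin n) → ℝ) : Prop :=
  PathComplete E ∧ (∀ s, Continuous (V s)) ∧
  ∃ (α₁ α₂ : ℝ≥0 → ℝ≥0) (γ : ℝ≥0), IsClassKInf α₁ ∧ IsClassKInf α₂ ∧ γ < 1 ∧
    (∀ s x, (α₁ ‖x‖₊ : ℝ) ≤ V s x ∧ V s x ≤ (α₂ ‖x‖₊ : ℝ)) ∧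
    (∀ a b i, (a, b, i) ∈ E → ∀ x, V b (f i x) ≤ (γ : ℝ) * V a x)

def IsCoveringFamily {S : Type*} (C : Finset (Set (List S))) : Prop :=
  (∀ B ∈ C, Language.IsRegular (B : Language S)) ∧
  (⋃ B ∈ C, B) = Set.univ ∧
  ∀ B ∈ C, ∀ h : S, ∃ C' ∈ C, (fun w => h :: w) '' B ⊆ C'

def IsMBLF {n : ℕ} {S : Type*} (C : Finset (Set (List S)))
    (f : S → EuclideanSpace ℝ (Fin n) → EuclideanSpace ℝ (Fin n))
    (W : {B // B ∈ C} → EuclideanSpace ℝ (Fin n) → ℝ) : Prop :=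
  (∀ B, Continuous (W B)) ∧
  ∃ (α₁ α₂ : ℝ≥0 → ℝ≥0) (γ : ℝ≥0), IsClassKInf α₁ ∧ IsClassKInf α₂ ∧ γ < 1 ∧
    (∀ B x, (α₁ ‖x‖₊ : ℝ) ≤ W B x ∧ W B x ≤ (α₂ ‖x‖₊ : ℝ)) ∧
    (∀ (B C' : {B // B ∈ C}) (h : S),
      (fun w => h :: w) '' (B : Set (List S)) ⊆ (C' : Set (List S)) →
      ∀ x, W C' (f h x) ≤ (γ : ℝ) * W B x)

def prefixClass {S : Type*} (i : List S) : Set (List S) := {w | w <+: i ∨ i <+: w}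

/-! Closure of the covering family lets one pick, for every memory `B` and letter `h`, a memory
`C' ⊇ h B`. Along any switching signal this yields a sequence of memories `B_k` with
`W(B_{k+1}, x_{k+1}) ≤ γ W(B_k, x_k)`, hence `α₁ |x_k| ≤ γ ^ k α₂ |x₀|`, and
`β r t = α₁⁻¹ (α₂ r * c ^ t)` with `γ ≤ c < 1` is the required class-KL bound. -/

theorem NNReal.continuous_const_rpow_coe {c : ℝ≥0} (hc : c ≠ 0) :
    Continuous fun t : ℝ≥0 => c ^ (t : ℝ) :=
  continuous_iff_continuousAt.2 fun t =>
    tendsto_const_nhds.nnrpow (NNReal.continuous_coe.tendsto t) (Or.inl hc)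

theorem NNReal.tendsto_const_rpow_coe_atTop_zero {c : ℝ≥0} (hc : c < 1) :
    Tendsto (fun t : ℝ≥0 => c ^ (t : ℝ)) atTop (𝓝 0) := by
  rw [← NNReal.tendsto_coe]
  simp only [NNReal.coe_rpow, NNReal.coe_zero]
  exact (tendsto_rpow_atTop_of_base_lt_one _ (neg_one_lt_zero.trans_le c.coe_nonneg)
    (mod_cast hc)).comp (tendsto_coe_atTop.mpr tendsto_id)

namespace IsClassKInf

variable {α : ℝ≥0 → ℝ≥0}

theorem surjective (hα : IsClassKInf α) : Function.Surjective α := by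
  intro y
  obtain ⟨r, hr⟩ := hα.2.2.2 y
  have hy : y ∈ Set.Icc (α 0) (α r) := ⟨by rw [hα.2.1]; exact zero_le, hr⟩
  obtain ⟨x, -, hx⟩ := intermediate_value_Icc (zero_le : 0 ≤ r) hα.1.continuousOn hy
  exact ⟨x, hx⟩

noncomputable def orderIso (hα : IsClassKInf α) : ℝ≥0 ≃o ℝ≥0 :=
  StrictMono.orderIsoOfSurjective α hα.2.2.1 hα.surjective

theorem le_orderIso_symm_iff (hα : IsClassKInf α) {x y : ℝ≥0} :
    x ≤ hα.orderIso.symm y ↔ α x ≤ y :=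
  hα.orderIso.le_symm_apply

end IsClassKInf

theorem IsClassKL.orderIso_comp (e : ℝ≥0 ≃o ℝ≥0) {β : ℝ≥0 → ℝ≥0 → ℝ≥0} (hβ : IsClassKL β) :
    IsClassKL fun r t => e (β r t) := by
  obtain ⟨hcont, hK, hL⟩ := hβ
  have he0 : e 0 = 0 := e.map_bot
  refine ⟨e.continuous.comp hcont, fun t => ?_, fun r => ?_⟩
  · obtain ⟨hcont_t, hzero, hmono⟩ := hK t
    exact ⟨e.continuous.comp hcont_t, by simp only [hzero, he0], e.strictMono.comp hmono⟩
  · obtain ⟨hanti, hlim⟩ := hL r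
    refine ⟨e.monotone.comp_antitone hanti, ?_⟩
    exact he0 ▸ (e.continuous.tendsto 0).comp hlim

theorem isClassKL_mul_const_rpow {κ : ℝ≥0 → ℝ≥0} (hκ : Continuous κ) (hκ0 : κ 0 = 0)
    (hκ_mono : StrictMono κ) {c : ℝ≥0} (hc0 : c ≠ 0) (hc1 : c < 1) :
    IsClassKL fun r t => κ r * c ^ (t : ℝ) := by
  have hpow := NNReal.continuous_const_rpow_coe hc0
  refine ⟨(hκ.comp continuous_fst).mul (hpow.comp continuous_snd), fun t => ?_, fun r => ?_⟩
  · refine ⟨hκ.mul continuous_const, by simp only [hκ0, zero_mul], fun a b hab => ?_⟩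
    exact mul_lt_mul_of_pos_right (hκ_mono hab) (NNReal.rpow_pos (pos_iff_ne_zero.mpr hc0))
  · refine ⟨fun s t hst => ?_, ?_⟩
    · exact mul_le_mul_right
        (NNReal.rpow_le_rpow_of_exponent_ge (pos_iff_ne_zero.mpr hc0) hc1.le hst) _
    · simpa only [mul_zero] using
        (NNReal.tendsto_const_rpow_coe_atTop_zero hc1).const_mul (κ r)

def memorySeq {N S : Type*} (next : N → S → N) (m₀ : N) (σ : ℕ → S) : ℕ → N
  | 0 => m₀
  | k + 1 => next (memorySeq next m₀ σ k) (σ k)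

theorem le_pow_mul_along_memorySeq {n : ℕ} {S N : Type*}
    {f : S → EuclideanSpace ℝ (Fin n) → EuclideanSpace ℝ (Fin n)}
    {V : N → EuclideanSpace ℝ (Fin n) → ℝ} {next : N → S → N} {γ : ℝ} (hγ : 0 ≤ γ)
    (hV : ∀ m h x, V (next m h) (f h x) ≤ γ * V m x) (m₀ : N) (σ : ℕ → S)
    (x₀ : EuclideanSpace ℝ (Fin n)) (k : ℕ) :
    V (memorySeq next m₀ σ k) (sol f σ x₀ k) ≤ γ ^ k * V m₀ x₀ := by
  induction k with
  | zero => simp [memorySeq, sol]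
  | succ k ih =>
    calc V (memorySeq next m₀ σ (k + 1)) (sol f σ x₀ (k + 1))
        ≤ γ * V (memorySeq next m₀ σ k) (sol f σ x₀ k) := hV _ _ _
      _ ≤ γ * (γ ^ k * V m₀ x₀) := mul_le_mul_of_nonneg_left ih hγ
      _ = γ ^ (k + 1) * V m₀ x₀ := by ring

theorem IsCoveringFamily.nonempty {S : Type*} {C : Finset (Set (List S))}
    (hC : IsCoveringFamily C) : C.Nonempty := by
  have : ([] : List S) ∈ ⋃ B ∈ C, B := hC.2.1 ▸ Set.mem_univ _
  obtain ⟨B, hB, -⟩ := Set.mem_iUnion₂.mp this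
  exact ⟨B, hB⟩

theorem IsMBLF.exists_decay {n : ℕ} {S : Type*} {C : Finset (Set (List S))}
    {f : S → EuclideanSpace ℝ (Fin n) → EuclideanSpace ℝ (Fin n)}
    {W : {B // B ∈ C} → EuclideanSpace ℝ (Fin n) → ℝ} (hne : C.Nonempty)
    (hsucc : ∀ B ∈ C, ∀ h : S, ∃ C' ∈ C, (fun w => h :: w) '' B ⊆ C') (hW : IsMBLF C f W) :
    ∃ (α₁ α₂ : ℝ≥0 → ℝ≥0) (γ : ℝ≥0), IsClassKInf α₁ ∧ IsClassKInf α₂ ∧ γ < 1 ∧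
      ∀ σ x₀ k, α₁ ‖sol f σ x₀ k‖₊ ≤ γ ^ k * α₂ ‖x₀‖₊ := by
  obtain ⟨-, α₁, α₂, γ, h₁, h₂, hγ, hbound, hdec⟩ := hW
  choose next hnext_mem hnext using fun (B : {B // B ∈ C}) (h : S) => hsucc B B.2 h
  obtain ⟨B₀, hB₀⟩ := hne
  refine ⟨α₁, α₂, γ, h₁, h₂, hγ, fun σ x₀ k => ?_⟩
  have hstep : ∀ B h x, W ⟨next B h, hnext_mem B h⟩ (f h x) ≤ γ * W B x :=
    fun B h => hdec B _ h (hnext B h)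
  have hreal : (α₁ ‖sol f σ x₀ k‖₊ : ℝ) ≤ γ ^ k * α₂ ‖x₀‖₊ :=
    calc (α₁ ‖sol f σ x₀ k‖₊ : ℝ)
        ≤ W (memorySeq _ ⟨B₀, hB₀⟩ σ k) (sol f σ x₀ k) := (hbound _ _).1
      _ ≤ γ ^ k * W ⟨B₀, hB₀⟩ x₀ := le_pow_mul_along_memorySeq γ.coe_nonneg hstep _ σ x₀ k
      _ ≤ γ ^ k * α₂ ‖x₀‖₊ := by gcongr; exact (hbound _ _).2
  exact_mod_cast hreal

theorem UGAS.of_decay {n : ℕ} {S : Type*}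
    {f : S → EuclideanSpace ℝ (Fin n) → EuclideanSpace ℝ (Fin n)} {α₁ α₂ : ℝ≥0 → ℝ≥0}
    {γ : ℝ≥0} (h₁ : IsClassKInf α₁) (h₂ : IsClassKInf α₂) (hγ : γ < 1)
    (hdecay : ∀ σ x₀ k, α₁ ‖sol f σ x₀ k‖₊ ≤ γ ^ k * α₂ ‖x₀‖₊) : UGAS f := by
  -- The base must be positive for `t ↦ c ^ t` to be continuous at `t = 0`.
  set c : ℝ≥0 := max γ 2⁻¹
  have hc0 : c ≠ 0 := (lt_max_of_lt_right (by norm_num)).ne'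
  have hc1 : c < 1 := max_lt hγ (by norm_num)
  refine ⟨fun r t => h₁.orderIso.symm (α₂ r * c ^ (t : ℝ)),
    (isClassKL_mul_const_rpow h₂.1 h₂.2.1 h₂.2.2.1 hc0 hc1).orderIso_comp _,
    fun σ x₀ k => h₁.le_orderIso_symm_iff.mpr ?_⟩
  rw [NNReal.coe_natCast, NNReal.rpow_natCast, mul_comm]
  exact (hdecay σ x₀ k).trans (by gcongr; exact le_max_left _ _)

theorem mblf_implies_ugas_general {S : Type}
    (n : ℕ)
    (f : S → EuclideanSpace ℝ (Fin n) → EuclideanSpace ℝ (Fin n))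
    (C : Finset (Set (List S))) (hC : IsCoveringFamily C)
    (W : {B // B ∈ C} → EuclideanSpace ℝ (Fin n) → ℝ)
    (hW : IsMBLF C f W) : UGAS f := by
  obtain ⟨α₁, α₂, γ, h₁, h₂, hγ, hdecay⟩ := hW.exists_decay hC.nonempty hC.2.2
  exact UGAS.of_decay h₁ h₂ hγ hdecay

/-- existence of a memory-based Lyapunov function implies UGAS. -/
theorem mblf_implies_ugas {S : Type} [Fintype S] [Nonempty S]
    (n : ℕ) (hn : 1 ≤ n)
    (f : S → EuclideanSpace ℝ (Fin n) → EuclideanSpace ℝ (Fin n))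
    (hf : ∀ i, Continuous (f i))
    (C : Finset (Set (List S))) (hC : IsCoveringFamily C)
    (W : {B // B ∈ C} → EuclideanSpace ℝ (Fin n) → ℝ)
    (hW : IsMBLF C f W) : UGAS f :=
  mblf_implies_ugas_general n f C hC W hW
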